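/- arXiv:1308.5239 — 4 statements merged into one kernel-verified Lean document; each statement's English description precedes it below -/
import Mathlib

section
/- Let U be a k-dimensional linear subspace of the vector space F_2^n over F_2, and equip F_2^n with the product measure where each coordinate is Bernoulli(p) for some p in (0,1). Then the probability of U is at least (min{p,1-p})^{n-k}. -/
/-!
Choose an information set of `U`: a set `I` of `k` coordinates such that restricting to `I` is a
bijection from `U` onto `F₂^I`. It exists because the coordinate functionals restricted to `U`
span its dual, so `k` of them form a basis. The mass of each `u ∈ U` is the product of its
`n - k` factors outside `I`, each at least `min p (1 - p)`, and of its factors on `I`; the latter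
sum to `1` over `U`, since their `I`-parts run through all of `F₂^I` exactly once.
-/

open scoped Classical BigOperators
open Filter

noncomputable section

/-- Hamming weight of a binary vector. -/
def hw {n : ℕ} (x : Fin n → ZMod 2) : ℕ :=
  (Finset.univ.filter fun i => x i ≠ 0).card

/-- Probability mass of a vector under the product Bernoulli(p) measure. -/
def pmass (p : ℝ) {n : ℕ} (x : Fin n → ZMod 2) : ℝ :=
  p ^ hw x * (1 - p) ^ (n - hw x)

/-- Probability of a set under the product Bernoulli(p) measure. -/
def pmeas (p : ℝ) {n : ℕ} (S : Set (Fin n → ZMod 2)) : ℝ :=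
  ∑ x : Fin n → ZMod 2, if x ∈ S then pmass p x else 0

/-- A decoder is `t`-local if each output coordinate depends on at most `t`
input coordinates. -/
def IsLocal {k n : ℕ} (g : (Fin k → ZMod 2) → (Fin n → ZMod 2)) (t : ℕ) : Prop :=
  ∀ a : Fin n, ∃ N : Finset (Fin k), N.card ≤ t ∧
    ∀ y y' : Fin k → ZMod 2, (∀ j ∈ N, y j = y' j) → g y a = g y' a

section InformationSet

variable {K V ι : Type*} [Field K] [Fintype ι]

theorem exists_finset_card_eq_finrank_span_image_eq_top [AddCommGroup V] [Module K V]
    [FiniteDimensional K V] {φ : ι → V} (hφ : Submodule.span K (Set.range φ) = ⊤) :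
    ∃ I : Finset ι, I.card = Module.finrank K V ∧ Submodule.span K (φ '' I) = ⊤ := by
  obtain ⟨b, -, -, hspan, hli⟩ :=
    exists_linearIndepOn_extension (linearIndepOn_empty K φ) (Set.empty_subset Set.univ)
  have hb_top : Submodule.span K (φ '' b) = ⊤ := by
    rw [eq_top_iff, ← hφ, ← Set.image_univ]
    exact Submodule.span_le.2 hspan
  let basis : Module.Basis b K V :=
    .mk hli (by rw [← Set.image_eq_range, hb_top])
  refine ⟨b.toFinset, ?_, by rwa [Set.coe_toFinset]⟩
  rw [Module.finrank_eq_card_basis basis, Set.toFinset_card]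

theorem Submodule.span_range_proj_comp_subtype_eq_top (U : Submodule K (ι → K)) :
    Submodule.span K (Set.range fun i => (LinearMap.proj i : (ι → K) →ₗ[K] K) ∘ₗ U.subtype) = ⊤ := by
  set W := Submodule.span K (Set.range fun i => (LinearMap.proj i : (ι → K) →ₗ[K] K) ∘ₗ U.subtype)
  have hW : W.dualCoannihilator = ⊥ := by
    refine eq_bot_iff.2 fun u hu => (Submodule.mem_bot K).2 (Subtype.ext (funext fun i => ?_))
    exact (Submodule.mem_dualCoannihilator u).1 hu _ (Submodule.subset_span ⟨i, rfl⟩)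
  rw [← Subspace.dualCoannihilator_dualAnnihilator_eq (W := W), hW, Submodule.dualAnnihilator_bot]

theorem Submodule.exists_finset_card_eq_finrank_bijective_restrict (U : Submodule K (ι → K)) :
    ∃ I : Finset ι, I.card = Module.finrank K U ∧
      Function.Bijective fun (u : U) (i : I) => (u : ι → K) i := by
  obtain ⟨I, hcard, hspan⟩ :=
    exists_finset_card_eq_finrank_span_image_eq_top U.span_range_proj_comp_subtype_eq_top
  rw [Subspace.dual_finrank_eq] at hcard
  let restrict : U →ₗ[K] I → K := LinearMap.funLeft K K ((↑) : I → ι) ∘ₗ U.subtype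
  have hinj : Function.Injective restrict := by
    rw [← LinearMap.ker_eq_bot, LinearMap.ker_eq_bot']
    intro u hu
    refine (Module.forall_dual_apply_eq_zero_iff K u).1 fun ψ => ?_
    have heval : Module.Dual.eval K U u = 0 := by
      refine LinearMap.ext_on hspan ?_
      rintro _ ⟨i, hi, rfl⟩
      exact congrFun hu ⟨i, hi⟩
    exact LinearMap.congr_fun heval ψ
  have hdim : Module.finrank K U = Module.finrank K (I → K) := by
    rw [Module.finrank_pi, Fintype.card_coe, hcard]
  exact ⟨I, hcard, hinj, (LinearMap.injective_iff_surjective_of_finrank_eq_finrank hdim).1 hinj⟩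

end InformationSet

theorem le_sum_prod_of_bijective_restrict {ι α β : Type*} [Fintype ι] [DecidableEq ι] [Fintype α]
    [Fintype β] {w : α → ℝ} {m : ℝ} (hm : 0 ≤ m) (hmw : ∀ a, m ≤ w a) (hw : ∑ a, w a = 1)
    {f : β → ι → α} {I : Finset ι} (hf : Function.Bijective fun b (i : I) => f b i) :
    m ^ Iᶜ.card ≤ ∑ b, ∏ i, w (f b i) := by
  have hw0 : ∀ a, 0 ≤ w a := fun a => hm.trans (hmw a)
  have hsplit : ∀ b, m ^ Iᶜ.card * ∏ i : I, w (f b i) ≤ ∏ i, w (f b i) := fun b => by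
    rw [← Finset.prod_mul_prod_compl I, Finset.prod_coe_sort I fun i => w (f b i), mul_comm]
    refine mul_le_mul_of_nonneg_left ?_ (Finset.prod_nonneg fun i _ => hw0 _)
    rw [← Finset.prod_const]
    exact Finset.prod_le_prod (fun _ _ => hm) fun i _ => hmw _
  calc m ^ Iᶜ.card = m ^ Iᶜ.card * ∑ y : I → α, ∏ i, w (y i) := by
        rw [← Fintype.prod_sum fun (_ : I) a => w a, hw, Finset.prod_const_one, mul_one]
    _ = ∑ b, m ^ Iᶜ.card * ∏ i : I, w (f b i) := by
        rw [← hf.sum_comp fun y : I → α => ∏ i, w (y i), Finset.mul_sum]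
    _ ≤ ∑ b, ∏ i, w (f b i) := Finset.sum_le_sum fun b _ => hsplit b

def bitWeight (p : ℝ) (a : ZMod 2) : ℝ := if a = 0 then 1 - p else p

theorem pmass_eq_prod_bitWeight (p : ℝ) {n : ℕ} (x : Fin n → ZMod 2) :
    pmass p x = ∏ i, bitWeight p (x i) := by
  have hcard : (Finset.univ.filter fun i => x i = 0).card = n - hw x := by
    have := Finset.card_filter_add_card_filter_not (s := Finset.univ) fun i => x i ≠ 0
    simp only [Finset.card_univ, Fintype.card_fin, not_not] at this
    rw [hw]
    omega
  unfold bitWeight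
  rw [Finset.prod_ite, Finset.prod_const, Finset.prod_const, hcard, pmass, hw, mul_comm]

theorem sum_bitWeight (p : ℝ) : ∑ a : ZMod 2, bitWeight p a = 1 := by
  rw [show (Finset.univ : Finset (ZMod 2)) = {0, 1} by decide, Finset.sum_pair (by decide)]
  simp [bitWeight]

theorem min_le_bitWeight (p : ℝ) (a : ZMod 2) : min p (1 - p) ≤ bitWeight p a := by
  unfold bitWeight
  split_ifs
  exacts [min_le_right _ _, min_le_left _ _]

theorem pmeas_coe_submodule (p : ℝ) {n : ℕ} (U : Submodule (ZMod 2) (Fin n → ZMod 2)) :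
    pmeas p (U : Set (Fin n → ZMod 2)) = ∑ u : U, ∏ i, bitWeight p ((u : Fin n → ZMod 2) i) := by
  simp only [pmeas, ← pmass_eq_prod_bitWeight]
  rw [← Finset.sum_filter]
  exact Finset.sum_subtype _ (by simp) _

theorem stmt0 {n k : ℕ} (p : ℝ) (hp0 : 0 < p) (hp1 : p < 1)
    (U : Submodule (ZMod 2) (Fin n → ZMod 2))
    (hU : Module.finrank (ZMod 2) U = k) :
    (min p (1 - p)) ^ (n - k) ≤ pmeas p (U : Set (Fin n → ZMod 2)) := by
  obtain ⟨I, hIcard, hbij⟩ := U.exists_finset_card_eq_finrank_bijective_restrict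
  have hcompl : n - k = Iᶜ.card := by
    rw [Finset.card_compl, Fintype.card_fin, hIcard, hU]
  rw [pmeas_coe_submodule, hcompl]
  exact le_sum_prod_of_bijective_restrict (le_min hp0.le (sub_nonneg.2 hp1.le))
    (min_le_bitWeight p) (sum_bitWeight p) hbij
end
end

section
/- Let U be a k-dimensional linear subspace of F_2^n, equipped with the product Bernoulli(p) measure for p in (0,1). Then the probability of U is at most (max{p,1-p})^{n-k}. -/
/-! A `k`-dimensional code `U` has an information set `S` of at most `k` coordinates: restriction
to `S` is injective on `U`. The Bernoulli mass is a product of one-coordinate weights; off `S`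
each factor is at most `max p (1 - p)`, while on `S` the restrictions of the codewords are
distinct, so their masses sum to at most the total mass `1` of `F_2^S`. -/

open scoped Classical BigOperators
open Filter

noncomputable section

def IsInformationSet {ι K : Type*} [Field K] (V : Submodule K (ι → K)) (S : Finset ι) : Prop :=
  ∀ v ∈ V, (∀ i ∈ S, v i = 0) → v = 0

theorem IsInformationSet.injOn_restrict {ι K : Type*} [Field K] {V : Submodule K (ι → K)}
    {S : Finset ι} (hS : IsInformationSet V S) :
    Set.InjOn (fun (x : ι → K) (i : S) => x i) V := by
  intro x hx y hy hxy
  refine sub_eq_zero.mp (hS _ (sub_mem hx hy) fun i hi => ?_)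
  simpa [sub_eq_zero] using congrFun hxy ⟨i, hi⟩

theorem exists_isInformationSet_card_le_finrank {ι K : Type*} [Fintype ι] [Field K]
    (V : Submodule K (ι → K)) :
    ∃ S : Finset ι, IsInformationSet V S ∧ S.card ≤ Module.finrank K V := by
  induction h : Module.finrank K V using Nat.strong_induction_on generalizing V with
  | _ d ih =>
    by_cases hV : V = ⊥
    · exact ⟨∅, fun v hv _ => by simpa [hV] using hv, by simp⟩
    obtain ⟨v, hvV, hv0⟩ := Submodule.exists_mem_ne_zero_of_ne_bot hV
    obtain ⟨i, hi⟩ : ∃ i, v i ≠ 0 := Function.ne_iff.mp hv0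
    set V' := V ⊓ LinearMap.ker (LinearMap.proj (R := K) (φ := fun _ : ι => K) i)
    have hlt : V' < V := lt_of_le_of_ne inf_le_left fun hV' => hi (hV' ▸ hvV : v ∈ V').2
    have hfr : Module.finrank K V' < d := h ▸ Submodule.finrank_lt_finrank_of_lt hlt
    obtain ⟨S, hS, hcard⟩ := ih _ hfr V' rfl
    refine ⟨insert i S, fun w hw hz => hS w ⟨hw, hz i (S.mem_insert_self i)⟩
      fun j hj => hz j (S.mem_insert_of_mem hj), ?_⟩
    exact (S.card_insert_le i).trans (by omega)

section ProductWeight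

variable {ι α : Type*} {f : α → ℝ}

theorem prod_le_prod_mul_pow_card_compl [Fintype ι] [DecidableEq ι] (hf0 : ∀ a, 0 ≤ f a)
    {M : ℝ} (hfM : ∀ a, f a ≤ M) (S : Finset ι) (x : ι → α) :
    ∏ i, f (x i) ≤ (∏ i ∈ S, f (x i)) * M ^ Sᶜ.card := by
  rw [← S.prod_mul_prod_compl, ← Finset.prod_const]
  exact mul_le_mul_of_nonneg_left (Finset.prod_le_prod (fun i _ => hf0 _) fun i _ => hfM _)
    (Finset.prod_nonneg fun i _ => hf0 _)

theorem sum_prod_le_one_of_injOn_restrict [Fintype α] (hf0 : ∀ a, 0 ≤ f a) (hf1 : ∑ a, f a = 1)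
    {A : Finset (ι → α)} {S : Finset ι} (hA : Set.InjOn (fun (x : ι → α) (i : S) => x i) A) :
    ∑ x ∈ A, ∏ i ∈ S, f (x i) ≤ 1 := by
  calc ∑ x ∈ A, ∏ i ∈ S, f (x i)
      = ∑ y ∈ A.image fun (x : ι → α) (i : S) => x i, ∏ i, f (y i) := by
        rw [Finset.sum_image hA]
        exact Finset.sum_congr rfl fun x _ => (S.prod_coe_sort fun i => f (x i)).symm
    _ ≤ ∑ y : S → α, ∏ i, f (y i) :=
        Finset.sum_le_sum_of_subset_of_nonneg (Finset.subset_univ _)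
          fun y _ _ => Finset.prod_nonneg fun i _ => hf0 _
    _ = 1 := by rw [← Fintype.prod_sum fun (_ : S) => f, hf1, Finset.prod_const_one]

theorem sum_prod_le_pow_of_injOn_restrict [Fintype ι] [DecidableEq ι] [Fintype α]
    (hf0 : ∀ a, 0 ≤ f a) (hf1 : ∑ a, f a = 1)
    {M : ℝ} (hfM : ∀ a, f a ≤ M) {A : Finset (ι → α)} {S : Finset ι}
    (hA : Set.InjOn (fun (x : ι → α) (i : S) => x i) A) :
    ∑ x ∈ A, ∏ i, f (x i) ≤ M ^ Sᶜ.card := by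
  obtain ⟨a, -, -⟩ := Finset.exists_ne_zero_of_sum_ne_zero (hf1 ▸ one_ne_zero)
  have hM : 0 ≤ M := (hf0 a).trans (hfM a)
  calc ∑ x ∈ A, ∏ i, f (x i)
      ≤ ∑ x ∈ A, (∏ i ∈ S, f (x i)) * M ^ Sᶜ.card :=
        Finset.sum_le_sum fun x _ => prod_le_prod_mul_pow_card_compl hf0 hfM S x
    _ ≤ 1 * M ^ Sᶜ.card := by
        rw [← Finset.sum_mul]
        exact mul_le_mul_of_nonneg_right (sum_prod_le_one_of_injOn_restrict hf0 hf1 hA)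
          (pow_nonneg hM _)
    _ = M ^ Sᶜ.card := one_mul _

end ProductWeight

def bernoulliWeight (p : ℝ) (b : ZMod 2) : ℝ := if b = 0 then 1 - p else p

theorem bernoulliWeight_nonneg {p : ℝ} (hp0 : 0 ≤ p) (hp1 : p ≤ 1) (b : ZMod 2) :
    0 ≤ bernoulliWeight p b := by
  unfold bernoulliWeight; split_ifs <;> linarith

theorem bernoulliWeight_le_max (p : ℝ) (b : ZMod 2) : bernoulliWeight p b ≤ max p (1 - p) := by
  unfold bernoulliWeight; split_ifs <;> simp

theorem sum_bernoulliWeight (p : ℝ) : ∑ b, bernoulliWeight p b = 1 := by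
  rw [show (Finset.univ : Finset (ZMod 2)) = {0, 1} from rfl]
  simp [bernoulliWeight]

theorem pmass_eq_prod_bernoulliWeight (p : ℝ) {n : ℕ} (x : Fin n → ZMod 2) :
    pmass p x = ∏ i, bernoulliWeight p (x i) := by
  have hcard := Finset.card_filter_add_card_filter_not (s := Finset.univ) (fun i => x i ≠ 0)
  simp only [Finset.card_univ, Fintype.card_fin, not_not] at hcard
  simp only [pmass, hw, bernoulliWeight, Finset.prod_ite, Finset.prod_const]
  rw [mul_comm]
  congr 2
  omega

theorem pmeas_eq_sum_prod (p : ℝ) {n : ℕ} (S : Set (Fin n → ZMod 2)) :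
    pmeas p S = ∑ x ∈ Finset.univ.filter (· ∈ S), ∏ i, bernoulliWeight p (x i) := by
  simp only [pmeas, Finset.sum_filter, pmass_eq_prod_bernoulliWeight]

theorem stmt1 {n k : ℕ} (p : ℝ) (hp0 : 0 < p) (hp1 : p < 1)
    (U : Submodule (ZMod 2) (Fin n → ZMod 2))
    (hU : Module.finrank (ZMod 2) U = k) :
    pmeas p (U : Set (Fin n → ZMod 2)) ≤ (max p (1 - p)) ^ (n - k) := by
  obtain ⟨S, hS, hSk⟩ := exists_isInformationSet_card_le_finrank U
  have hinj : Set.InjOn (fun (x : Fin n → ZMod 2) (i : S) => x i)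
      (Finset.univ.filter (· ∈ (U : Set (Fin n → ZMod 2)))) := by
    simpa using hS.injOn_restrict
  rw [pmeas_eq_sum_prod]
  refine (sum_prod_le_pow_of_injOn_restrict (bernoulliWeight_nonneg hp0.le hp1.le)
    (sum_bernoulliWeight p) (bernoulliWeight_le_max p) hinj).trans ?_
  rw [Finset.card_compl, Fintype.card_fin]
  exact pow_le_pow_of_le_one (by positivity) (max_le hp1.le (by linarith)) (by omega)
end
end

section
/- Let X_1,...,X_{k+1} be i.i.d. Bernoulli(p) with 0 < p ≤ 1/2. For any encoder f: F_2^{k+1} → F_2^k and any 2-local decoder g: F_2^k → F_2^{k+1} (each output coordinate depends on at most 2 input coordinates), the probability that g(f(X^{k+1})) = X^{k+1} is at most 1 − p^2. -/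
open scoped Classical BigOperators
open Filter

noncomputable section

/-! The decoder can only succeed on the image of `g`, so it suffices to find a set of output
patterns missed by `g` of probability at least `p²`. We induct on the set of inputs, conditioning
on one output `a` at a time: a missed set of the remaining outputs is independent of `x a`, so a
bound valid in both branches `x a = 0, 1` persists. An input used by at most one output is dropped
together with that output. An output of the form `y j + F y`, with `F` depending on at most one
further input, determines `y j` in each branch, so input `j` and output `a` are eliminated. Any
other output of two inputs takes some value `s` at a single input pair; in the branch `x a = s`,
of probability at least `p`, that pair is fixed and another user of it becomes a leaf, an output
depending on at most one input. While every input has at least two users, eliminating the input of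
a leaf creates a new leaf, and this chain ends at a constant output, which misses a pattern of
probability at least `p`. -/

open Finset Function

def bernWeight (p : ℝ) (v : ZMod 2) : ℝ := if v = 0 then 1 - p else p

def bernProb {ι : Type*} [Fintype ι] (p : ℝ) (M : Set (ι → ZMod 2)) : ℝ :=
  ∑ x, if x ∈ M then ∏ a, bernWeight p (x a) else 0

lemma sum_bernWeight (p : ℝ) : ∑ v : ZMod 2, bernWeight p v = 1 := by
  rw [show (univ : Finset (ZMod 2)) = {0, 1} from rfl, sum_pair zero_ne_one]
  simp [bernWeight]

lemma bernWeight_nonneg {p : ℝ} (hp0 : 0 ≤ p) (hp1 : p ≤ 1) (v : ZMod 2) :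
    0 ≤ bernWeight p v := by
  unfold bernWeight; split_ifs <;> linarith

lemma le_bernWeight {p : ℝ} (hp : p ≤ 1 / 2) (v : ZMod 2) : p ≤ bernWeight p v := by
  unfold bernWeight; split_ifs <;> linarith

section BernoulliProduct

variable {ι : Type*} [Fintype ι] {p : ℝ}

lemma bernProb_univ : bernProb p (Set.univ : Set (ι → ZMod 2)) = 1 := by
  simp [bernProb, ← Fintype.prod_sum, sum_bernWeight]

lemma bernProb_compl (M : Set (ι → ZMod 2)) : bernProb p Mᶜ = 1 - bernProb p M := by
  rw [← bernProb_univ (ι := ι) (p := p), bernProb, bernProb, bernProb, ← sum_sub_distrib]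
  refine sum_congr rfl fun x _ => ?_
  by_cases hx : x ∈ M <;> simp [hx]

lemma bernProb_mono (hp0 : 0 ≤ p) (hp1 : p ≤ 1) {M M' : Set (ι → ZMod 2)} (h : M ⊆ M') :
    bernProb p M ≤ bernProb p M' := by
  refine sum_le_sum fun x _ => ?_
  have : 0 ≤ ∏ a, bernWeight p (x a) := prod_nonneg fun a _ => bernWeight_nonneg hp0 hp1 _
  by_cases hx : x ∈ M
  · simp [hx, h hx]
  · split_ifs <;> simp_all

lemma bernProb_nonneg (hp0 : 0 ≤ p) (hp1 : p ≤ 1) (M : Set (ι → ZMod 2)) :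
    0 ≤ bernProb p M := by
  refine sum_nonneg fun x _ => ?_
  split_ifs
  exacts [prod_nonneg fun a _ => bernWeight_nonneg hp0 hp1 _, le_rfl]

theorem bernProb_setOf_mem_coord {O : Set ι} {a : ι} (ha : a ∉ O)
    (M : ZMod 2 → Set (ι → ZMod 2)) (hM : ∀ u, DependsOn (· ∈ M u) O) :
    bernProb p {x | x ∈ M (x a)} = ∑ u, bernWeight p u * bernProb p (M u) := by
  let e := Equiv.funSplitAt a (ZMod 2)
  -- Membership in `N t` ignores coordinate `a`, so the inner sum does not depend on `x a`.
  have split : ∀ N : ZMod 2 → Set (ι → ZMod 2), (∀ t, DependsOn (· ∈ N t) O) →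
      bernProb p {x | x ∈ N (x a)} = ∑ t, bernWeight p t *
        ∑ z, if e.symm (0, z) ∈ N t then ∏ j : {j // j ≠ a}, bernWeight p (z j) else 0 := by
    intro N hN
    rw [bernProb, ← e.symm.sum_comp, Fintype.sum_prod_type]
    refine sum_congr rfl fun t _ => ?_
    rw [mul_sum]
    refine sum_congr rfl fun z _ => ?_
    have hmem : e.symm (t, z) ∈ N t ↔ e.symm (0, z) ∈ N t := by
      refine iff_of_eq (hN t fun j hj => ?_)
      simp [e, ne_of_mem_of_not_mem hj ha]
    have hprod : ∏ j, bernWeight p (e.symm (t, z) j) =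
        bernWeight p t * ∏ j : {j // j ≠ a}, bernWeight p (z j) := by
      rw [Fintype.prod_eq_mul_prod_subtype_ne _ a]
      congr 1
      · simp [e]
      · exact prod_congr rfl fun j _ => by simp [e, j.2]
    have hat : e.symm (t, z) a = t := by simp [e]
    rw [Set.mem_ofPred, hat, hprod, hmem, mul_ite, mul_zero]
  rw [split M hM]
  refine sum_congr rfl fun u _ => ?_
  have hMu := split (fun _ => M u) fun _ => hM u
  rw [Set.ofPred_mem_eq] at hMu
  rw [hMu, ← sum_mul, sum_bernWeight, one_mul]

lemma bernProb_setOf_coord_eq (a : ι) (v : ZMod 2) :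
    bernProb p {x : ι → ZMod 2 | x a = v} = bernWeight p v := by
  refine (bernProb_setOf_mem_coord (O := ∅) (Set.notMem_empty a)
    (fun u => {_x | u = v}) fun u _ _ _ => rfl).trans ?_
  rw [Fintype.sum_eq_single v fun u hu => by simp [hu, bernProb]]
  simp [bernProb_univ]

end BernoulliProduct

section MissedPatterns

variable {ι κ : Type*}

/-- Outputs are indexed first: `G a y` is output `a` at input `y`. -/
def missedOn (G : ι → (κ → ZMod 2) → ZMod 2) (O : Finset ι) : Set (ι → ZMod 2) :=
  {x | ∀ y, ∃ a ∈ O, G a y ≠ x a}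

def Supported (G : ι → (κ → ZMod 2) → ZMod 2) (S : ι → Finset κ) (O : Finset ι)
    (I : Finset κ) : Prop :=
  ∀ a ∈ O, S a ⊆ I ∧ #(S a) ≤ 2 ∧ DependsOn (G a) (S a : Set κ)

def substAt (G : ι → (κ → ZMod 2) → ZMod 2) (j : κ) (φ : (κ → ZMod 2) → ZMod 2) :
    ι → (κ → ZMod 2) → ZMod 2 :=
  fun e y => G e (update y j (φ y))

variable {G : ι → (κ → ZMod 2) → ZMod 2} {O O' : Finset ι} {a : ι}

lemma missedOn_mono (h : O ⊆ O') : missedOn G O ⊆ missedOn G O' := fun x hx y => by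
  obtain ⟨e, he, hne⟩ := hx y
  exact ⟨e, h he, hne⟩

lemma dependsOn_mem_missedOn : DependsOn (· ∈ missedOn G O) (O : Set ι) := fun x x' h => by
  simp only [missedOn, Set.mem_ofPred]
  exact propext (forall_congr' fun y => exists_congr fun e => and_congr_right fun he => by
    rw [h e he])

variable [Fintype ι] {p : ℝ}

lemma sum_bernWeight_mul_le_bernProb_missedOn (hp0 : 0 ≤ p) (hp1 : p ≤ 1) (ha : a ∈ O)
    (G' : ZMod 2 → ι → (κ → ZMod 2) → ZMod 2)
    (hG' : ∀ y, ∀ e ∈ O.erase a, G' (G a y) e y = G e y) :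
    ∑ u, bernWeight p u * bernProb p (missedOn (G' u) (O.erase a)) ≤
      bernProb p (missedOn G O) := by
  rw [← bernProb_setOf_mem_coord (O := ↑(O.erase a)) (mem_coe.not.2 (notMem_erase a O)) _
    fun u => dependsOn_mem_missedOn]
  refine bernProb_mono hp0 hp1 fun x hx y => ?_
  by_cases h : G a y = x a
  · obtain ⟨e, he, hne⟩ := hx y
    exact ⟨e, mem_of_mem_erase he, by rwa [← hG' y e he, h]⟩
  · exact ⟨a, ha, h⟩

lemma le_bernProb_missedOn_of_const (hp0 : 0 ≤ p) (hp : p ≤ 1 / 2) (ha : a ∈ O)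
    (hconst : ∀ y y', G a y = G a y') : p ≤ bernProb p (missedOn G O) := by
  obtain ⟨c, hc⟩ : ∃ c, ∀ y, G a y = c := ⟨G a 0, fun y => hconst y 0⟩
  calc p ≤ bernWeight p (c + 1) := le_bernWeight hp _
    _ = bernProb p {x : ι → ZMod 2 | x a = c + 1} := (bernProb_setOf_coord_eq a _).symm
    _ ≤ bernProb p (missedOn G O) := by
      refine bernProb_mono (by linarith) (by linarith) fun x hx y => ⟨a, ha, ?_⟩
      rw [hc, Set.mem_ofPred.1 hx]
      exact left_ne_add.2 one_ne_zero

lemma le_bernProb_missedOn_of_eq_add (hp0 : 0 ≤ p) (hp1 : p ≤ 1) (ha : a ∈ O) {j : κ}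
    {F : (κ → ZMod 2) → ZMod 2} (hG : ∀ y, G a y = y j + F y) {r : ℝ}
    (hr : ∀ u, r ≤ bernProb p (missedOn (substAt G j fun y => u + F y) (O.erase a))) :
    r ≤ bernProb p (missedOn G O) := by
  calc r = ∑ u, bernWeight p u * r := by rw [← sum_mul, sum_bernWeight, one_mul]
    _ ≤ ∑ u, bernWeight p u *
          bernProb p (missedOn (substAt G j fun y => u + F y) (O.erase a)) :=
      sum_le_sum fun u _ => mul_le_mul_of_nonneg_left (hr u) (bernWeight_nonneg hp0 hp1 u)
    _ ≤ bernProb p (missedOn G O) := by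
      refine sum_bernWeight_mul_le_bernProb_missedOn hp0 hp1 ha _ fun y e _ => ?_
      rw [substAt, hG, add_assoc, CharTwo.add_self_eq_zero, add_zero, update_eq_self]

lemma bernWeight_mul_le_bernProb_missedOn_of_forced (hp0 : 0 ≤ p) (hp1 : p ≤ 1) (ha : a ∈ O)
    {s : ZMod 2} {G' : ι → (κ → ZMod 2) → ZMod 2}
    (hG' : ∀ y, G a y = s → ∀ e ∈ O.erase a, G' e y = G e y) :
    bernWeight p s * bernProb p (missedOn G' (O.erase a)) ≤ bernProb p (missedOn G O) := by
  let G'' : ZMod 2 → ι → (κ → ZMod 2) → ZMod 2 := fun u => if u = s then G' else G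
  calc bernWeight p s * bernProb p (missedOn G' (O.erase a))
      = bernWeight p s * bernProb p (missedOn (G'' s) (O.erase a)) := by simp [G'']
    _ ≤ ∑ u, bernWeight p u * bernProb p (missedOn (G'' u) (O.erase a)) :=
      single_le_sum (f := fun u => bernWeight p u * bernProb p (missedOn (G'' u) (O.erase a)))
        (fun u _ => mul_nonneg (bernWeight_nonneg hp0 hp1 u) (bernProb_nonneg hp0 hp1 _))
        (mem_univ s)
    _ ≤ bernProb p (missedOn G O) := by
      refine sum_bernWeight_mul_le_bernProb_missedOn hp0 hp1 ha _ fun y e he => ?_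
      by_cases hs : G a y = s
      · simp [G'', hs, hG' y hs e he]
      · simp [G'', hs]

end MissedPatterns

section Supports

variable {ι κ : Type*} {G : ι → (κ → ZMod 2) → ZMod 2} {S : ι → Finset κ} {O : Finset ι}
  {I : Finset κ}

lemma Supported.mono {O' : Finset ι} (hS : Supported G S O I) (hO : O' ⊆ O) :
    Supported G S O' I := fun a ha => hS a (hO ha)

lemma Supported.erase_of_notMem (hS : Supported G S O I) (i : κ) :
    Supported G S {e ∈ O | i ∉ S e} (I.erase i) := fun e he => by
  obtain ⟨heO, hie⟩ := mem_filter.1 he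
  obtain ⟨hSI, h2, hdep⟩ := hS e heO
  exact ⟨fun l hl => mem_erase.2 ⟨fun h => hie (h ▸ hl), hSI hl⟩, h2, hdep⟩

lemma supported_substAt (hS : Supported G S O I) {j : κ} {φ : (κ → ZMod 2) → ZMod 2}
    {T : Finset κ} (hφ : DependsOn φ (T : Set κ)) (hT : T ⊆ I.erase j) (hT1 : #T ≤ 1) :
    Supported (substAt G j φ) (fun e => (S e).erase j ∪ if j ∈ S e then T else ∅) O
      (I.erase j) := by
  intro e he
  obtain ⟨hSI, hcard, hdep⟩ := hS e he
  refine ⟨union_subset (erase_subset_erase j hSI) ?_, ?_, fun y y' hyy' => hdep fun l hl => ?_⟩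
  · split_ifs
    exacts [hT, empty_subset _]
  · refine (card_union_le _ _).trans ?_
    split_ifs with hj
    · rw [card_erase_of_mem hj]
      omega
    · rw [card_empty, erase_eq_of_notMem hj]
      omega
  · by_cases hlj : l = j
    · subst hlj
      simp only [update_self]
      exact hφ fun t ht =>
        hyy' t (mem_coe.2 (mem_union_right _ (by rw [if_pos (mem_coe.1 hl)]; exact ht)))
    · simp only [update_of_ne hlj]
      exact hyy' l (by simp [hlj, hl])

lemma supported_substAt_const (hS : Supported G S O I) (j : κ) (w : ZMod 2) :
    Supported (substAt G j fun _ => w) (fun e => (S e).erase j) O (I.erase j) := by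
  simpa using supported_substAt hS (T := ∅) (by simpa using dependsOn_const w)
    (empty_subset _) (by simp)

lemma card_filter_mem_le_card_filter_mem_erase {S' : ι → Finset κ} {a : ι} {i : κ}
    (hia : i ∉ S a) (hS' : ∀ e ∈ O, i ∈ S e → i ∈ S' e) :
    #{e ∈ O | i ∈ S e} ≤ #{e ∈ O.erase a | i ∈ S' e} :=
  card_le_card fun e he => by
    obtain ⟨heO, hie⟩ := mem_filter.1 he
    exact mem_filter.2 ⟨mem_erase.2 ⟨fun h => hia (h ▸ hie), heO⟩, hS' e heO hie⟩

end Supports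

section BooleanFunctions

variable {κ : Type*} {g : (κ → ZMod 2) → ZMod 2}

lemma exists_eq_add_of_dependsOn {T : Finset κ} (hg : DependsOn g (T : Set κ)) (hT : #T ≤ 1)
    (hne : ¬∀ y y', g y = g y') : ∃ i ∈ T, ∃ c, ∀ y, g y = y i + c := by
  obtain ⟨i, rfl⟩ : ∃ i, T = {i} := by
    rcases T.eq_empty_or_nonempty with rfl | hT0
    · rw [coe_empty] at hg
      exact absurd hg.empty hne
    · exact card_eq_one.1 (le_antisymm hT hT0.card_pos)
  have hrep : ∀ y, g y = g (update 0 i (y i)) := fun y => hg fun l hl => by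
    rw [coe_singleton, Set.mem_singleton_iff] at hl
    subst hl
    rw [update_self]
  have classify : ∀ φ : ZMod 2 → ZMod 2, (∀ v, φ v = v + φ 0) ∨ ∀ v, φ v = φ 0 := by decide
  rcases classify fun v => g (update 0 i v) with h | h
  · exact ⟨i, mem_singleton_self i, _, fun y => (hrep y).trans (h (y i))⟩
  · exact absurd (fun y y' => by rw [hrep y, hrep y', h, h (y' i)]) hne

lemma dependsOn_pair_cases {i j : κ} (hij : i ≠ j)
    (hg : DependsOn g (({i, j} : Finset κ) : Set κ)) :
    DependsOn g (({i} : Finset κ) : Set κ) ∨ DependsOn g (({j} : Finset κ) : Set κ) ∨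
      (∃ c, ∀ y, g y = y j + (y i + c)) ∨ ∃ w₁ w₂ s, ∀ y, g y = s ↔ y i = w₁ ∧ y j = w₂ := by
  let h : ZMod 2 → ZMod 2 → ZMod 2 := fun u v => g (update (update 0 i u) j v)
  have hrep : ∀ y, g y = h (y i) (y j) := fun y => hg fun l hl => by
    rcases (by simpa using hl : l = i ∨ l = j) with rfl | rfl
    · simp [update_of_ne hij]
    · simp
  have classify : ∀ h : ZMod 2 → ZMod 2 → ZMod 2, (∀ u v, h u v = h u 0) ∨
      (∀ u v, h u v = h 0 v) ∨ (∃ c, ∀ u v, h u v = u + v + c) ∨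
      ∃ w₁ w₂ s, ∀ u v, h u v = s ↔ u = w₁ ∧ v = w₂ := by
    decide
  rcases classify h with h1 | h2 | ⟨c, hc⟩ | ⟨w₁, w₂, s, hs⟩
  · refine Or.inl fun y y' hyy' => ?_
    rw [hrep y, hrep y', h1, h1 (y' i), hyy' i (by simp)]
  · refine Or.inr (Or.inl fun y y' hyy' => ?_)
    rw [hrep y, hrep y', h2, h2 _ (y' j), hyy' j (by simp)]
  · exact Or.inr (Or.inr (Or.inl ⟨c, fun y => by rw [hrep, hc]; ring⟩))
  · exact Or.inr (Or.inr (Or.inr ⟨w₁, w₂, s, fun y => by rw [hrep, hs]⟩))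

end BooleanFunctions

section Induction

variable {ι κ : Type*} [Fintype ι] {p : ℝ}

theorem le_bernProb_missedOn_of_leaf (hp0 : 0 ≤ p) (hp : p ≤ 1 / 2) {I : Finset κ} :
    ∀ {G : ι → (κ → ZMod 2) → ZMod 2} {S : ι → Finset κ} {O : Finset ι}, Supported G S O I →
      (∀ i ∈ I, 2 ≤ #{e ∈ O | i ∈ S e}) → (∃ a ∈ O, #(S a) ≤ 1) →
      p ≤ bernProb p (missedOn G O) := by
  induction I using Finset.strongInduction with
  | H I ih =>
  intro G S O hS hdeg ⟨a, ha, ha1⟩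
  obtain ⟨hSI, -, hdep⟩ := hS a ha
  by_cases hconst : ∀ y y', G a y = G a y'
  · exact le_bernProb_missedOn_of_const hp0 hp ha hconst
  obtain ⟨i, hia, c, hc⟩ := exists_eq_add_of_dependsOn hdep ha1 hconst
  have hiI := hSI hia
  obtain ⟨b, hb, hba⟩ := exists_mem_ne (hdeg i hiI) a
  obtain ⟨hbO, hib⟩ := mem_filter.1 hb
  -- after fixing `y i`, the other user `b` of `i` becomes the new leaf
  refine le_bernProb_missedOn_of_eq_add hp0 (by linarith) ha (F := fun _ => c) hc fun u => ?_
  refine ih _ (erase_ssubset hiI) ((supported_substAt_const hS i _).mono (erase_subset a O))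
    (fun i' hi' => ?_) ⟨b, mem_erase.2 ⟨hba, hbO⟩, ?_⟩
  · obtain ⟨hi'i, hi'I⟩ := mem_erase.1 hi'
    exact (hdeg i' hi'I).trans (card_filter_mem_le_card_filter_mem_erase
      (fun h => hi'i (card_le_one.1 ha1 _ h _ hia)) fun e _ hie => mem_erase.2 ⟨hi'i, hie⟩)
  · have := (hS b hbO).2.1
    rw [card_erase_of_mem hib]
    omega

-- In the branch `x a = s` both inputs of `a` are fixed, and another user of `i` becomes a leaf.
theorem sq_le_bernProb_missedOn_of_forced (hp0 : 0 ≤ p) (hp : p ≤ 1 / 2) {I : Finset κ}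
    {G : ι → (κ → ZMod 2) → ZMod 2} {S : ι → Finset κ} {O : Finset ι} (hS : Supported G S O I)
    (hdeg : ∀ i ∈ I, 1 < #{e ∈ O | i ∈ S e}) {a : ι} (ha : a ∈ O) {i j : κ} (hij : i ≠ j)
    (hSa : S a = {i, j}) {w₁ w₂ s : ZMod 2} (hs : ∀ y, G a y = s ↔ y i = w₁ ∧ y j = w₂) :
    p ^ 2 ≤ bernProb p (missedOn G O) := by
  have hp1 : p ≤ 1 := by linarith
  obtain ⟨b, hb, hba⟩ := exists_mem_ne (hdeg i ((hS a ha).1 (by simp [hSa]))) a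
  obtain ⟨hbO, hib⟩ := mem_filter.1 hb
  have hleaf : p ≤ bernProb p (missedOn (substAt (substAt G j fun _ => w₂) i fun _ => w₁)
      (O.erase a)) := by
    refine le_bernProb_missedOn_of_leaf hp0 hp (I := (I.erase j).erase i)
      ((supported_substAt_const (supported_substAt_const hS j w₂) i w₁).mono
        (erase_subset a O)) (fun i' hi' => ?_) ⟨b, mem_erase.2 ⟨hba, hbO⟩, ?_⟩
    · simp only [mem_erase] at hi'
      obtain ⟨hi'i, hi'j, hi'I⟩ := hi'
      exact (hdeg i' hi'I).trans_le (card_filter_mem_le_card_filter_mem_erase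
        (by simp [hSa, hi'i, hi'j]) fun e _ hie => by simp [hi'i, hi'j, hie])
    · have := (hS b hbO).2.1
      have := card_erase_le (s := S b) (a := j)
      rw [card_erase_of_mem (mem_erase.2 ⟨hij, hib⟩)]
      omega
  calc p ^ 2 = p * p := sq p
    _ ≤ bernWeight p s * bernProb p (missedOn (substAt (substAt G j fun _ => w₂) i
          fun _ => w₁) (O.erase a)) :=
      mul_le_mul (le_bernWeight hp s) hleaf hp0 (bernWeight_nonneg hp0 hp1 s)
    _ ≤ bernProb p (missedOn G O) :=
      bernWeight_mul_le_bernProb_missedOn_of_forced hp0 hp1 ha fun y hy e _ => by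
        obtain ⟨hyi, hyj⟩ := (hs y).1 hy
        rw [substAt, substAt, ← hyi, ← hyj, update_eq_self, update_eq_self]

theorem sq_le_bernProb_missedOn (hp0 : 0 ≤ p) (hp : p ≤ 1 / 2) {I : Finset κ} :
    ∀ {G : ι → (κ → ZMod 2) → ZMod 2} {S : ι → Finset κ} {O : Finset ι}, Supported G S O I →
      #I < #O → p ^ 2 ≤ bernProb p (missedOn G O) := by
  induction I using Finset.strongInduction with
  | H I ih =>
  intro G S O hS hIO
  have hp1 : p ≤ 1 := by linarith
  by_cases hconst : ∃ a ∈ O, ∀ y y', G a y = G a y'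
  · obtain ⟨a, ha, hc⟩ := hconst
    exact (by nlinarith : p ^ 2 ≤ p).trans (le_bernProb_missedOn_of_const hp0 hp ha hc)
  by_cases hlow : ∃ i ∈ I, #{e ∈ O | i ∈ S e} ≤ 1
  · obtain ⟨i, hiI, hi1⟩ := hlow
    have hcard := card_filter_add_card_filter_not (s := O) (fun e => i ∈ S e)
    refine (ih _ (erase_ssubset hiI) (hS.erase_of_notMem i) ?_).trans
      (bernProb_mono hp0 hp1 (missedOn_mono (filter_subset _ O)))
    have := card_pos.2 ⟨i, hiI⟩
    rw [card_erase_of_mem hiI]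
    omega
  by_cases hsingle : ∃ a ∈ O, ∃ T ⊆ I, #T ≤ 1 ∧ DependsOn (G a) (T : Set κ)
  · obtain ⟨a, ha, T, hTI, hT1, hdep⟩ := hsingle
    obtain ⟨i, hiT, c, hc⟩ := exists_eq_add_of_dependsOn hdep hT1 fun h => hconst ⟨a, ha, h⟩
    have hiI := hTI hiT
    refine le_bernProb_missedOn_of_eq_add hp0 hp1 ha (F := fun _ => c) hc fun u => ?_
    refine ih _ (erase_ssubset hiI) ((supported_substAt_const hS i _).mono (erase_subset a O)) ?_
    have := card_pos.2 ⟨i, hiI⟩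
    rw [card_erase_of_mem hiI, card_erase_of_mem ha]
    omega
  obtain ⟨a, ha⟩ : O.Nonempty := card_pos.1 (by omega)
  obtain ⟨hSI, hcard, hdep⟩ := hS a ha
  have hSa2 : #(S a) = 2 := by
    by_contra h
    exact hsingle ⟨a, ha, S a, hSI, (by omega : #(S a) ≤ 1), hdep⟩
  obtain ⟨i, j, hij, hSa⟩ := card_eq_two.1 hSa2
  rw [hSa] at hSI hdep
  have hiI : i ∈ I := hSI (by simp)
  have hjI : j ∈ I := hSI (by simp)
  rcases dependsOn_pair_cases hij hdep with h | h | ⟨c, hc⟩ | ⟨w₁, w₂, s, hs⟩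
  · exact absurd ⟨a, ha, {i}, by simpa using hiI, by simp, h⟩ hsingle
  · exact absurd ⟨a, ha, {j}, by simpa using hjI, by simp, h⟩ hsingle
  · refine le_bernProb_missedOn_of_eq_add hp0 hp1 ha (F := fun y => y i + c) hc fun u => ?_
    refine ih _ (erase_ssubset hjI) ((supported_substAt hS (T := {i})
      (fun y y' h => by rw [h i (by simp)]) (singleton_subset_iff.2 (mem_erase.2 ⟨hij, hiI⟩))
      (card_singleton i).le).mono (erase_subset a O)) ?_
    have := card_pos.2 ⟨j, hjI⟩
    rw [card_erase_of_mem hjI, card_erase_of_mem ha]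
    omega
  · push Not at hlow
    exact sq_le_bernProb_missedOn_of_forced hp0 hp hS hlow ha hij hSa hs

end Induction

lemma pmass_eq_prod_bernWeight (p : ℝ) {n : ℕ} (x : Fin n → ZMod 2) :
    pmass p x = ∏ a, bernWeight p (x a) := by
  have hcard := card_filter_add_card_filter_not (s := univ) (fun a => x a = 0)
  rw [card_univ, Fintype.card_fin] at hcard
  simp only [bernWeight, prod_ite, prod_const, pmass, hw, ne_eq]
  rw [mul_comm, show n - #{a | ¬x a = 0} = #{a | x a = 0} by omega]

lemma pmeas_eq_bernProb (p : ℝ) {n : ℕ} (M : Set (Fin n → ZMod 2)) :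
    pmeas p M = bernProb p M := by
  simp only [pmeas, bernProb, pmass_eq_prod_bernWeight]
  convert rfl

theorem stmt11 {k : ℕ} (p : ℝ) (hp0 : 0 < p) (hp : p ≤ 1 / 2)
    (f : (Fin (k + 1) → ZMod 2) → (Fin k → ZMod 2))
    (g : (Fin k → ZMod 2) → (Fin (k + 1) → ZMod 2)) (hg : IsLocal g 2) :
    pmeas p {x | g (f x) = x} ≤ 1 - p ^ 2 := by
  choose S hS using hg
  have hsupp : Supported (fun a y => g y a) S univ univ :=
    fun a _ => ⟨subset_univ _, (hS a).1, fun y y' h => (hS a).2 y y' h⟩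
  have hmissed := sq_le_bernProb_missedOn hp0.le hp hsupp (by simp)
  have hsub : {x | g (f x) = x} ⊆ (missedOn (fun a y => g y a) univ)ᶜ := fun x hx hmiss => by
    obtain ⟨a, -, ha⟩ := hmiss (f x)
    exact ha (congrFun hx a)
  calc pmeas p {x | g (f x) = x} = bernProb p {x | g (f x) = x} := pmeas_eq_bernProb p _
    _ ≤ bernProb p (missedOn (fun a y => g y a) univ)ᶜ :=
      bernProb_mono hp0.le (by linarith) hsub
    _ = 1 - bernProb p (missedOn (fun a y => g y a) univ) := bernProb_compl _
    _ ≤ 1 - p ^ 2 := by linarith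
end
end

section
/- Let X be a Bernoulli(p) source with p in (0,1) and t ≥ 1 an integer. Then the asymptotic rate of t-locally decodable almost lossless source coding with an F_2-linear encoder equals 1: R*(t) = lim_{ε→0} limsup_{n→∞} k*(n,ε,t)/n = 1, where k*(n,ε,t) is the minimum k for which there exist a linear encoder f: F_2^n → F_2^k and a t-local decoder g: F_2^k → F_2^n with P[g(f(X^n)) ≠ X^n] ≤ ε. -/
open scoped Classical BigOperators
open Filter

noncomputable section

/-- The minimum number of encoded bits of a `t`-locally decodable almost
lossless source code with a linear encoder, block length `n`, and block error
probability at most `ε`, for the i.i.d. Bernoulli(p) source. -/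
def kstarLin (p : ℝ) (n t : ℕ) (ε : ℝ) : ℕ :=
  sInf {k : ℕ | ∃ (G : Matrix (Fin n) (Fin k) (ZMod 2))
    (g : (Fin k → ZMod 2) → (Fin n → ZMod 2)), IsLocal g t ∧
      pmeas p {x | g (Matrix.vecMul x G) ≠ x} ≤ ε}

/-!
The identity code shows `k* ≤ n`. Conversely, let `k < n` and let `N a` be the at most `t`
coordinates of the codeword read by output bit `a` of the decoder. A sparse-kernel argument
yields an `a` and a `w` with `w a = 1`, Hamming weight at most `t + 1`, and `w G` vanishing on
`N a`. The decoder then outputs the same bit `a` on `x G` and on `(x + w) G`, so it errs on `x`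
or on `x + w`. Adding `w` changes the probability of a word by a factor at least
`(p (1 - p)) ^ (t + 1)`, so the error probability is at least `(p (1 - p)) ^ (t + 1) / 2`.
Hence `k* = n` for every small `ε > 0`, and the rate is exactly `1`.
-/

open Finset Module Matrix

section SparseKernel

variable {K ι V : Type*} [Field K] [Fintype ι] [AddCommGroup V] [Module K V]
  [FiniteDimensional K V]

/- `L` has a nonzero kernel vector `u` supported on those coordinates of `w`; subtracting a
suitable multiple of `u` from `w` kills one of them. -/
theorem exists_card_support_lt_of_finrank_lt (L : (ι → K) →ₗ[K] V) {w : ι → K} (hw : L w = 0)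
    (a : ι) (hS : finrank K V < #(({i | w i ≠ 0} : Finset ι).erase a)) :
    ∃ w', L w' = 0 ∧ w' a = w a ∧ #{i | w' i ≠ 0} < #{i | w i ≠ 0} := by
  set S := ({i | w i ≠ 0} : Finset ι).erase a
  let ext := Function.ExtendByZero.linearMap K (Subtype.val : S → ι)
  have hext : ∀ (u : S → K) (i : S), ext u i = u i := fun u i =>
    Subtype.val_injective.extend_apply _ _ _
  have hext' : ∀ (u : S → K) i, i ∉ S → ext u i = 0 := fun u i hi =>
    Function.extend_apply' _ _ _ fun ⟨j, hj⟩ => hi (hj ▸ j.2)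
  obtain ⟨u, hu, hu0⟩ := Submodule.ne_bot_iff _ |>.1 <| LinearMap.ker_ne_bot_of_finrank_lt
    (f := L ∘ₗ ext) (by rwa [finrank_fintype_fun_eq_card, Fintype.card_coe])
  obtain ⟨i₀, hi₀⟩ := Function.ne_iff.1 hu0
  refine ⟨w - (w i₀ / u i₀) • ext u, ?_, by simp [hext' u a (notMem_erase a _)], ?_⟩
  · rw [map_sub, map_smul, hw, show L (ext u) = 0 from hu, smul_zero, sub_zero]
  refine card_lt_card <| (ssubset_iff_of_subset fun i => ?_).2 ⟨i₀, mem_of_mem_erase i₀.2, ?_⟩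
  · simp only [mem_filter, mem_univ, true_and, Pi.sub_apply, Pi.smul_apply, smul_eq_mul]
    by_cases hi : i ∈ S
    · exact fun _ => (mem_filter.1 (mem_of_mem_erase hi)).2
    · simp [hext' u i hi]
  · simp [hext, div_mul_cancel₀ _ (show u i₀ ≠ 0 from hi₀)]

theorem exists_map_eq_zero_apply_eq_one_card_le (L : (ι → K) →ₗ[K] V) {a : ι} {v : ι → K}
    (hv : L v = 0) (hva : v a ≠ 0) :
    ∃ w, L w = 0 ∧ w a = 1 ∧ #{i | w i ≠ 0} ≤ finrank K V + 1 := by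
  obtain ⟨w, ⟨hw, hwa⟩, hmin⟩ := (measure fun w : ι → K => #{i | w i ≠ 0}).wf.has_min
    {w | L w = 0 ∧ w a ≠ 0} ⟨v, hv, hva⟩
  refine ⟨(w a)⁻¹ • w, by simp [hw], by simp [hwa], ?_⟩
  simp only [Pi.smul_apply, smul_eq_mul, ne_eq, mul_eq_zero, inv_eq_zero, hwa, false_or]
  by_contra! hbig
  obtain ⟨w', hw', hw'a, hlt⟩ := exists_card_support_lt_of_finrank_lt L hw a <| by
    have := pred_card_le_card_erase (s := ({i | w i ≠ 0} : Finset ι)) (a := a)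
    omega
  exact hmin w' ⟨hw', hw'a ▸ hwa⟩ hlt

end SparseKernel

theorem pmass_eq_prod (p : ℝ) {n : ℕ} (x : Fin n → ZMod 2) :
    pmass p x = ∏ i, if x i = 0 then 1 - p else p := by
  rw [prod_ite, prod_const, prod_const, pmass, hw, mul_comm]
  congr
  have := card_filter_add_card_filter_not (s := univ) (p := fun i => x i = 0)
  simp only [card_univ, Fintype.card_fin, ne_eq] at this ⊢
  omega

theorem pmass_nonneg {p : ℝ} (hp0 : 0 ≤ p) (hp1 : p ≤ 1) {n : ℕ} (x : Fin n → ZMod 2) :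
    0 ≤ pmass p x := by
  unfold pmass; have : 0 ≤ 1 - p := by linarith
  positivity

theorem sum_pmass (p : ℝ) (n : ℕ) : ∑ x : Fin n → ZMod 2, pmass p x = 1 := by
  simp only [pmass_eq_prod]
  rw [← Fintype.prod_sum (fun _ b => if b = 0 then 1 - p else p)]
  simp [show (univ : Finset (ZMod 2)) = {0, 1} from rfl]

theorem pow_hw_mul_pmass_le_pmass_add {p : ℝ} (hp0 : 0 ≤ p) (hp1 : p ≤ 1) {n : ℕ} (x w : Fin n → ZMod 2) :
    (p * (1 - p)) ^ hw w * pmass p x ≤ pmass p (x + w) := by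
  have hflip : ∀ b c : ZMod 2, (if c ≠ 0 then p * (1 - p) else 1) * (if b = 0 then 1 - p else p)
      ≤ if b + c = 0 then 1 - p else p := by
    have hq : 0 ≤ 1 - p := by linarith
    have h01 : ∀ b : ZMod 2, b = 0 ∨ b = 1 := by decide
    intro b c
    rcases h01 b with rfl | rfl <;> rcases h01 c with rfl | rfl <;> simp +decide <;>
      nlinarith [mul_nonneg hp0 hp0, mul_nonneg hq hq, mul_nonneg (mul_nonneg hq hq) hp0]
  have hpow : (p * (1 - p)) ^ hw w = ∏ i, if w i ≠ 0 then p * (1 - p) else 1 := by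
    rw [prod_ite, prod_const, prod_const_one, mul_one, hw]
  rw [hpow, pmass_eq_prod, pmass_eq_prod, ← prod_mul_distrib]
  refine prod_le_prod (fun i _ => mul_nonneg ?_ ?_) fun i _ => hflip (x i) (w i) <;>
    split_ifs <;> nlinarith

theorem pow_hw_le_two_mul_pmeas {p : ℝ} (hp0 : 0 ≤ p) (hp1 : p ≤ 1) {n : ℕ}
    (w : Fin n → ZMod 2) {E : Set (Fin n → ZMod 2)} (hE : ∀ x, x ∈ E ∨ x + w ∈ E) :
    (p * (1 - p)) ^ hw w ≤ 2 * pmeas p E := by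
  set c := (p * (1 - p)) ^ hw w
  have hc1 : c ≤ 1 := pow_le_one₀ (by nlinarith) (by nlinarith)
  have hww : ∀ y : Fin n → ZMod 2, y + w + w = y := fun y => by
    rw [add_assoc, ZModModule.add_self, add_zero]
  have hshift : ∑ x, (if x + w ∈ E then c * pmass p x else 0) ≤ pmeas p E := by
    rw [← Equiv.sum_comp (Equiv.addRight w)]
    refine sum_le_sum fun y _ => ?_
    simp only [Equiv.coe_addRight, hww]
    split_ifs
    · simpa [hww] using pow_hw_mul_pmass_le_pmass_add hp0 hp1 (y + w) w
    · rfl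
  calc c = ∑ x, c * pmass p x := by rw [← mul_sum, sum_pmass p n, mul_one]
    _ ≤ ∑ x, ((if x ∈ E then pmass p x else 0) + if x + w ∈ E then c * pmass p x else 0) := by
      refine sum_le_sum fun x _ => ?_
      have := pmass_nonneg hp0 hp1 x
      rcases hE x with h | h <;> split_ifs <;> nlinarith
    _ ≤ 2 * pmeas p E := by
      rw [sum_add_distrib, two_mul]
      exact add_le_add le_rfl hshift

theorem exists_hw_le_vecMul_eq_zero_on {n k t : ℕ} (hkn : k < n)
    (G : Matrix (Fin n) (Fin k) (ZMod 2)) (N : Fin n → Finset (Fin k))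
    (hN : ∀ a, #(N a) ≤ t) :
    ∃ a w, w a = 1 ∧ hw w ≤ t + 1 ∧ ∀ j ∈ N a, (w ᵥ* G) j = 0 := by
  obtain ⟨v, hv, hv0⟩ := Submodule.ne_bot_iff _ |>.1 <|
    LinearMap.ker_ne_bot_of_finrank_lt (f := G.vecMulLinear) (by simpa using hkn)
  obtain ⟨a, ha⟩ := Function.ne_iff.1 hv0
  let L := LinearMap.funLeft (ZMod 2) (ZMod 2) (Subtype.val : N a → Fin k) ∘ₗ G.vecMulLinear
  have hLv : L v = 0 := by
    rw [LinearMap.comp_apply, show G.vecMulLinear v = 0 from hv, map_zero]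
  obtain ⟨w, hLw, hwa, hcard⟩ := exists_map_eq_zero_apply_eq_one_card_le L hLv ha
  refine ⟨a, w, hwa, ?_, fun j hj => congrFun hLw ⟨j, hj⟩⟩
  rw [finrank_fintype_fun_eq_card, Fintype.card_coe] at hcard
  have hw_le : hw w ≤ #(N a) + 1 := by unfold hw; convert hcard
  exact hw_le.trans (Nat.add_le_add_right (hN a) 1)

theorem pow_le_two_mul_pmeas_decodingError {p : ℝ} (hp0 : 0 ≤ p) (hp1 : p ≤ 1) {n k t : ℕ}
    (hkn : k < n) (G : Matrix (Fin n) (Fin k) (ZMod 2))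
    (g : (Fin k → ZMod 2) → (Fin n → ZMod 2)) (hg : IsLocal g t) :
    (p * (1 - p)) ^ (t + 1) ≤ 2 * pmeas p {x | g (x ᵥ* G) ≠ x} := by
  choose N hN hNg using hg
  obtain ⟨a, w, hwa, hwt, hwG⟩ := exists_hw_le_vecMul_eq_zero_on hkn G N hN
  set E := {x | g (x ᵥ* G) ≠ x}
  have hE : ∀ x, x ∈ E ∨ x + w ∈ E := by
    by_contra! ⟨x, hx, hxw⟩
    simp only [E, Set.mem_ofPred_eq, not_not] at hx hxw
    have hsame : g ((x + w) ᵥ* G) a = g (x ᵥ* G) a :=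
      hNg a _ _ fun j hj => by simp [add_vecMul, hwG j hj]
    rw [hx, hxw, Pi.add_apply, hwa] at hsame
    simp at hsame
  calc (p * (1 - p)) ^ (t + 1) ≤ (p * (1 - p)) ^ hw w :=
        pow_le_pow_of_le_one (by nlinarith) (by nlinarith) hwt
    _ ≤ _ := pow_hw_le_two_mul_pmeas hp0 hp1 w hE

theorem kstarLin_eq_self {p : ℝ} (hp0 : 0 ≤ p) (hp1 : p ≤ 1) {n t : ℕ} (ht : 1 ≤ t) {ε : ℝ}
    (hε0 : 0 ≤ ε) (hε : 2 * ε < (p * (1 - p)) ^ (t + 1)) : kstarLin p n t ε = n := by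
  have hid : n ∈ {k | ∃ (G : Matrix (Fin n) (Fin k) (ZMod 2))
      (g : (Fin k → ZMod 2) → (Fin n → ZMod 2)), IsLocal g t ∧
        pmeas p {x | g (x ᵥ* G) ≠ x} ≤ ε} :=
    ⟨1, id, fun a => ⟨{a}, by simpa using ht, fun y y' h => h a (mem_singleton_self a)⟩,
      by simpa [pmeas] using hε0⟩
  refine le_antisymm (Nat.sInf_le hid) (le_csInf ⟨n, hid⟩ ?_)
  rintro k ⟨G, g, hg, herr⟩
  by_contra! hkn
  linarith [pow_le_two_mul_pmeas_decodingError hp0 hp1 hkn G g hg]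

theorem stmt12 (p : ℝ) (hp0 : 0 < p) (hp1 : p < 1) (t : ℕ) (ht : 1 ≤ t) :
    Tendsto
      (fun ε : ℝ =>
        Filter.limsup (fun n : ℕ => (kstarLin p n t ε : ℝ) / n) atTop)
      (nhdsWithin 0 (Set.Ioi 0)) (nhds 1) := by
  have hδ : 0 < (p * (1 - p)) ^ (t + 1) / 2 := by
    have : 0 < p * (1 - p) := mul_pos hp0 (by linarith)
    positivity
  refine tendsto_const_nhds.congr' ?_
  filter_upwards [Ioo_mem_nhdsGT hδ] with ε ⟨hε0, hεδ⟩
  have hrate : (fun n : ℕ => (kstarLin p n t ε : ℝ) / n) =ᶠ[atTop] fun _ => 1 := by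
    filter_upwards [eventually_gt_atTop 0] with n hn
    rw [kstarLin_eq_self hp0.le hp1.le ht hε0.le (by linarith), div_self (by positivity)]
  rw [limsup_congr hrate, limsup_const]

end
end
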